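/- arXiv:2401.14988 — 3 statements merged into one kernel-verified Lean document; each statement's English description precedes it below -/
import Mathlib

section
/- Let w : [0,∞) → [0,∞) be continuous, let T* > 0, 0 ≤ ρ < 1, and suppose that for all t ≥ T*, w(t) ≤ ρ · sup_{s∈[t−T*, t]} w(s) + δ, where δ ≥ 0 is a constant. Then for all t ≥ T*, w(t) ≤ (sup_{τ∈[0,T*]} w(τ)) · exp((ln ρ / T*)(t − T*)) + δ/(1 − ρ). -/
open Set

theorem stmt_6 (Tstar ρ δ : ℝ) (hTstar : 0 < Tstar) (hρ0 : 0 ≤ ρ) (hρ1 : ρ < 1)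
    (hδ : 0 ≤ δ)
    (w : ℝ → ℝ) (hw_cont : ContinuousOn w (Set.Ici 0)) (hw_nonneg : ∀ t ≥ (0:ℝ), 0 ≤ w t)
    (hrec : ∀ t ≥ Tstar, w t ≤ ρ * sSup (w '' Set.Icc (t - Tstar) t) + δ) :
    ∀ t ≥ Tstar,
      w t ≤ sSup (w '' Set.Icc 0 Tstar) * Real.exp (Real.log ρ / Tstar * (t - Tstar)) +
        δ / (1 - ρ) := by
  intro t ht
  set M := sSup (w '' Set.Icc 0 Tstar) with hM
  set c := δ / (1 - ρ) with hc
  have h1ρ : 0 < 1 - ρ := by linarith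
  have hc0 : 0 ≤ c := div_nonneg hδ h1ρ.le
  have hcρ : ρ * c + δ = c := by
    rw [hc]; field_simp
    ring
  have hbdd : ∀ a b : ℝ, 0 ≤ a → BddAbove (w '' Set.Icc a b) := fun a b ha =>
    isCompact_Icc.bddAbove_image (hw_cont.mono (fun x hx => le_trans ha hx.1))
  have hmem : ∀ a b x : ℝ, 0 ≤ a → x ∈ Set.Icc a b → w x ≤ sSup (w '' Set.Icc a b) :=
    fun a b x ha hx => le_csSup (hbdd a b ha) ⟨x, hx, rfl⟩
  have hM0 : 0 ≤ M := le_trans (hw_nonneg 0 le_rfl) (hmem 0 Tstar 0 le_rfl ⟨le_rfl, hTstar.le⟩)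
  set S : ℕ → ℝ := fun n => sSup (w '' Set.Icc (n * Tstar) ((n + 1) * Tstar)) with hS
  have hS0 : S 0 = M := by simp [hS, hM]
  have key : ∀ n : ℕ, S n ≤ ρ ^ n * M + c := by
    intro n
    induction n with
    | zero => simp [hS0]; linarith
    | succ n ih =>
      have hn0 : (0:ℝ) ≤ (n:ℝ) * Tstar := by positivity
      have hstep : S (n + 1) ≤ ρ * max (S n) (S (n + 1)) + δ := by
        apply csSup_le
        · exact (Set.nonempty_Icc.mpr (by nlinarith [Nat.cast_nonneg (α := ℝ) n])).image w
        rintro x ⟨t', ht', rfl⟩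
        have ht'1 : ((n:ℝ) + 1) * Tstar ≤ t' := by
          have := ht'.1; push_cast at this ⊢; linarith
        have ht'2 : t' ≤ ((n:ℝ) + 2) * Tstar := by
          have := ht'.2; push_cast at this ⊢; linarith
        have ht'T : Tstar ≤ t' := by nlinarith [Nat.cast_nonneg (α := ℝ) n]
        have h1 := hrec t' ht'T
        have h2 : sSup (w '' Set.Icc (t' - Tstar) t') ≤ max (S n) (S (n + 1)) := by
          apply csSup_le (((Set.nonempty_Icc.mpr (by linarith))).image w)
          rintro x ⟨s, hs, rfl⟩
          rcases le_or_gt s (((n:ℝ) + 1) * Tstar) with hcase | hcase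
          · refine le_trans (hmem ((n:ℝ) * Tstar) (((n:ℝ) + 1) * Tstar) s hn0
              ⟨by linarith [hs.1], hcase⟩) ?_
            exact le_max_of_le_left (le_of_eq (by push_cast [hS]; ring_nf))
          · refine le_trans (hmem (((n:ℝ) + 1) * Tstar) (((n:ℝ) + 2) * Tstar) s
              (by nlinarith [Nat.cast_nonneg (α := ℝ) n]) ⟨hcase.le, by linarith [hs.2]⟩) ?_
            exact le_max_of_le_right (le_of_eq (by push_cast [hS]; ring_nf))
        calc w t' ≤ ρ * sSup (w '' Set.Icc (t' - Tstar) t') + δ := h1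
          _ ≤ ρ * max (S n) (S (n + 1)) + δ := by nlinarith
      rcases le_total (S (n + 1)) (S n) with hle | hle
      · rw [max_eq_left hle] at hstep
        have : ρ * S n ≤ ρ * (ρ ^ n * M + c) := by nlinarith
        calc S (n + 1) ≤ ρ * S n + δ := hstep
          _ ≤ ρ * (ρ ^ n * M + c) + δ := by linarith
          _ = ρ ^ (n + 1) * M + (ρ * c + δ) := by ring
          _ = ρ ^ (n + 1) * M + c := by rw [hcρ]
      · rw [max_eq_right hle] at hstep
        have hSc : S (n + 1) ≤ c := by
          rw [hc, le_div_iff₀ h1ρ]; nlinarith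
        have : 0 ≤ ρ ^ (n + 1) * M := by positivity
        linarith
  -- choose n with n*T* ≤ t ≤ (n+1)*T*, n ≥ 1
  obtain ⟨n, hn1, hnl, hnr⟩ : ∃ n : ℕ, 1 ≤ n ∧ (n:ℝ) * Tstar ≤ t ∧ t ≤ ((n:ℝ) + 1) * Tstar := by
    have hfl1 : (1:ℤ) ≤ ⌊t / Tstar⌋ := by
      rw [Int.le_floor]; push_cast; rw [le_div_iff₀ hTstar]; linarith
    refine ⟨⌊t / Tstar⌋.toNat, by omega, ?_, ?_⟩
    · have h1 : ((⌊t / Tstar⌋.toNat : ℤ) : ℝ) ≤ t / Tstar := by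
        rw [Int.toNat_of_nonneg (by omega)]; exact Int.floor_le _
      push_cast at h1
      rw [le_div_iff₀ hTstar] at h1
      exact h1
    · have h2 : t / Tstar < ((⌊t / Tstar⌋.toNat : ℤ) : ℝ) + 1 := by
        rw [Int.toNat_of_nonneg (by omega)]; exact Int.lt_floor_add_one _
      push_cast at h2
      rw [div_lt_iff₀ hTstar] at h2
      nlinarith
  have hwt : w t ≤ S n := by
    have := hmem ((n:ℝ) * Tstar) (((n:ℝ) + 1) * Tstar) t (by positivity) ⟨hnl, hnr⟩
    simpa [hS] using this
  have hwt2 : w t ≤ ρ ^ n * M + c := le_trans hwt (key n)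
  have hfin : ρ ^ n * M ≤ M * Real.exp (Real.log ρ / Tstar * (t - Tstar)) := by
    rcases eq_or_lt_of_le hρ0 with hρz | hρpos
    · rw [← hρz, zero_pow (by omega), zero_mul]
      positivity
    · have hlog : Real.log ρ ≤ 0 := Real.log_nonpos hρ0 hρ1.le
      have hexp : ρ ^ n = Real.exp ((n:ℝ) * Real.log ρ) := by
        rw [mul_comm, Real.exp_mul, Real.exp_log hρpos, ← Real.rpow_natCast]
      have hle : (n:ℝ) * Real.log ρ ≤ Real.log ρ / Tstar * (t - Tstar) := by
        rw [div_mul_eq_mul_div, le_div_iff₀ hTstar]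
        nlinarith
      calc ρ ^ n * M = M * Real.exp ((n:ℝ) * Real.log ρ) := by rw [hexp]; ring
        _ ≤ M * Real.exp (Real.log ρ / Tstar * (t - Tstar)) :=
          mul_le_mul_of_nonneg_left (Real.exp_le_exp.mpr hle) hM0
  linarith
end

section
/- Let φ : [0,T] → ℝ^n be a unitary modulating function of order n, i.e., φ ∈ C^n, φ^{(i)}(0) = 0 and φ^{(i)}(T) = (−1)^i e_{n−i} for i = 0,…,n−1. Then the boundary coefficient matrix Δ(t) with entries Δ_{k,j} = (L_j^* φ)(T) evaluated component-wise (where L_j are the minor operators of a monic time-variant differential operator with coefficients a_i(t)) is lower unitriangular: Δ(t) = Toeplitz lower-triangular with ones on the diagonal and entries a_{n−1}(t),…,a_1(t) below, hence det Δ(t) = 1 and Δ(t) is invertible for every t. -/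
open Matrix

/-- Evaluation at the right endpoint `T` of the adjoint minor operator `L_k^*`
(with `a_n = 1`) applied componentwise to the vector modulating function `φ`,
with the time-variant coefficients evaluated at time `t`:
`(L_k^* φ)(T) = Σ_{i=0}^{n−k} (−1)^{n−k−i} a_{n−i}(t) φ^{(n−k−i)}(T)`. -/
noncomputable def adjMinorEval (n : ℕ) (a : ℕ → ℝ → ℝ) (φ : ℝ → (Fin n → ℝ))
    (T t : ℝ) (k : ℕ) : Fin n → ℝ := fun r =>
  ∑ i ∈ Finset.range (n - k + 1),
    (-1 : ℝ) ^ (n - k - i) * (if i = 0 then 1 else a (n - i) t) *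
      iteratedDeriv (n - k - i) (fun s => φ s r) T

lemma iteratedDeriv_pi_comp {n m : ℕ} (φ : ℝ → (Fin n → ℝ)) (hφ : ContDiff ℝ n φ)
    (hm : m ≤ n) (r : Fin n) (T : ℝ) :
    iteratedDeriv m (fun s => φ s r) T = iteratedDeriv m φ T r := by
  have h := (ContinuousLinearMap.proj (R := ℝ) (φ := fun _ : Fin n => ℝ)
      r).iteratedFDeriv_comp_left (hφ.contDiffAt (x := T)) (by exact_mod_cast hm)
  have : (fun s => φ s r) = (ContinuousLinearMap.proj (R := ℝ)
      (φ := fun _ : Fin n => ℝ) r) ∘ φ := rfl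
  rw [this, iteratedDeriv_eq_iteratedFDeriv, iteratedDeriv_eq_iteratedFDeriv, h]
  rfl

theorem stmt_13 (n : ℕ) (hn : 0 < n) (T : ℝ) (hT : 0 < T)
    (a : ℕ → ℝ → ℝ) (ha : ∀ i < n, Continuous (a i))
    (φ : ℝ → (Fin n → ℝ)) (hφ : ContDiff ℝ n φ)
    (hφ0 : ∀ i < n, iteratedDeriv i φ 0 = 0)
    (hφT : ∀ (i : ℕ) (hi : i < n),
      iteratedDeriv i φ T =
        (-1 : ℝ) ^ i • (Pi.single (⟨n - 1 - i, by omega⟩ : Fin n) (1 : ℝ) : Fin n → ℝ)) :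
    ∀ t : ℝ,
      let Δ : Matrix (Fin n) (Fin n) ℝ :=
        Matrix.of fun r j : Fin n => adjMinorEval n a φ T t (j.val + 1) r
      Δ = Matrix.of (fun i j : Fin n =>
            if i = j then 1 else if j < i then a (n - (i.val - j.val)) t else 0) ∧
        Δ.det = 1 ∧ IsUnit Δ := by
  intro t Δ
  have hΔ : Δ = Matrix.of (fun i j : Fin n =>
      if i = j then 1 else if j < i then a (n - (i.val - j.val)) t else 0) := by
    ext r j
    show adjMinorEval n a φ T t (j.val + 1) r = _
    unfold adjMinorEval
    have hterm : ∀ i ∈ Finset.range (n - (j.val + 1) + 1),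
        (-1 : ℝ) ^ (n - (j.val + 1) - i) * (if i = 0 then 1 else a (n - i) t) *
          iteratedDeriv (n - (j.val + 1) - i) (fun s => φ s r) T =
        if j.val + i = r.val then (if i = 0 then 1 else a (n - i) t) else 0 := by
      intro i hi
      rw [Finset.mem_range] at hi
      have hj : j.val < n := j.isLt
      have hmn : n - (j.val + 1) - i < n := by omega
      rw [iteratedDeriv_pi_comp φ hφ (le_of_lt hmn) r T, hφT _ hmn]
      have hidx : n - 1 - (n - (j.val + 1) - i) = j.val + i := by omega
      simp only [Pi.smul_apply, Pi.single_apply, smul_eq_mul]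
      rcases eq_or_ne (j.val + i) r.val with h | h
      · have : (⟨n - 1 - (n - (j.val + 1) - i), by omega⟩ : Fin n) = r := by
          apply Fin.ext; simp [hidx, h]
        rw [if_pos this.symm, if_pos h]
        rw [mul_one, mul_comm, ← mul_assoc, ← pow_add, ← two_mul, pow_mul]
        norm_num
      · have : (⟨n - 1 - (n - (j.val + 1) - i), by omega⟩ : Fin n) ≠ r := by
          intro hc
          apply h
          have := congrArg Fin.val hc
          simpa [hidx] using this
        rw [if_neg (Ne.symm this), if_neg h]
        ring
    rw [Finset.sum_congr rfl hterm]
    simp only [Matrix.of_apply]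
    rcases lt_trichotomy r j with h | h | h
    · have hrj : r.val < j.val := h
      rw [Finset.sum_eq_zero (by intro i hi; rw [if_neg (by omega)]),
        if_neg (by omega : ¬ r = j), if_neg (by omega : ¬ j < r)]
    · subst h
      rw [Finset.sum_eq_single 0]
      · simp
      · intro i hi h0
        rw [if_neg (by omega)]
      · intro h0; simp at h0
    · have hjr : j.val < r.val := h
      have hr : r.val < n := r.isLt
      rw [Finset.sum_eq_single (r.val - j.val)]
      · rw [if_pos (by omega), if_neg (by omega : ¬ r.val - j.val = 0),
          if_neg (by omega : ¬ r = j), if_pos (by omega : j < r)]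
      · intro i hi hne
        rw [if_neg (by omega)]
      · intro h0
        rw [Finset.mem_range] at h0
        omega
  have hdet : Δ.det = 1 := by
    rw [hΔ]
    rw [Matrix.det_of_lowerTriangular]
    · simp
    · intro i j hij
      have : i < j := hij
      simp [Matrix.of_apply, Fin.ne_of_lt this, not_lt.2 (le_of_lt this), this.not_gt]
  exact ⟨hΔ, hdet, (Matrix.isUnit_iff_isUnit_det _).2 (hdet ▸ isUnit_one)⟩
end

section
/- Let λ > 0, T̄ > 0 with T̄λ < 1, and let w : [0,∞) → [0,∞) satisfy, for all t ≥ T*, w(t) ≤ T̄λ · sup_{s∈[t−T*,t]} w(s) + W(t) where W : ℝ → [0,∞) is bounded with sup_t W(t) = W̄. Then limsup_{t→∞} w(t) ≤ W̄/(1 − T̄λ); in particular, if W ≡ 0 then w(t) → 0 as t → ∞. -/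
open Filter

theorem stmt_19 (lam Tbar Tstar : ℝ) (hlam : 0 < lam) (hTbar : 0 < Tbar)
    (hTlam : Tbar * lam < 1) (hTstar : 0 < Tstar)
    (w : ℝ → ℝ) (hw_cont : Continuous w) (hw_nonneg : ∀ t, 0 ≤ w t)
    (W : ℝ → ℝ) (hW_nonneg : ∀ t, 0 ≤ W t)
    (Wbar : ℝ) (hWbar : ∀ t, W t ≤ Wbar)
    (hrec : ∀ t ≥ Tstar, w t ≤ Tbar * lam * sSup (w '' Set.Icc (t - Tstar) t) + W t) :
    limsup w atTop ≤ Wbar / (1 - Tbar * lam) ∧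
      ((∀ t, W t = 0) → Tendsto w atTop (nhds 0)) := by
  set c := Tbar * lam with hc
  have hc0 : 0 < c := mul_pos hTbar hlam
  have hc1 : c < 1 := hTlam
  have hWbar0 : 0 ≤ Wbar := le_trans (hW_nonneg 0) (hWbar 0)
  -- maximum of w on compact intervals
  have hmax : ∀ a b : ℝ, a ≤ b → ∃ s ∈ Set.Icc a b,
      sSup (w '' Set.Icc a b) = w s ∧ ∀ y ∈ Set.Icc a b, w y ≤ w s := by
    intro a b hab
    obtain ⟨s, hs, hm⟩ := isCompact_Icc.exists_isMaxOn (Set.nonempty_Icc.mpr hab)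
      hw_cont.continuousOn
    refine ⟨s, hs, ?_, hm⟩
    exact IsGreatest.csSup_eq ⟨⟨s, hs, rfl⟩, by rintro y ⟨x, hx, rfl⟩; exact hm hx⟩
  -- global boundedness of w on [0, ∞)
  obtain ⟨s0, hs0, _, hMbd⟩ := hmax 0 Tstar hTstar.le
  set M := w s0 with hM
  set B := max M (Wbar / (1 - c)) with hB
  have hboundS : ∀ t ≥ (0:ℝ), w t ≤ B := by
    intro t ht
    rcases le_or_gt t Tstar with h | h
    · exact le_max_of_le_left (hMbd t ⟨ht, h⟩)
    · obtain ⟨s, hs, _, hSbd⟩ := hmax 0 t (hTstar.le.trans h.le)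
      refine le_trans (hSbd t ⟨ht, le_rfl⟩) ?_
      rcases le_or_gt s Tstar with hsT | hsT
      · exact le_max_of_le_left (hMbd s ⟨hs.1, hsT⟩)
      · have hrec' := hrec s hsT.le
        have hsub : sSup (w '' Set.Icc (s - Tstar) s) ≤ w s := by
          apply csSup_le ((Set.nonempty_Icc.mpr (by linarith)).image w)
          rintro y ⟨x, hx, rfl⟩
          exact hSbd x ⟨by linarith [hx.1], hx.2.trans hs.2⟩
        have h1 : w s ≤ c * w s + Wbar := by
          have := hWbar s
          nlinarith [hrec', hsub]
        have h2 : w s ≤ Wbar / (1 - c) := by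
          rw [le_div_iff₀ (by linarith)]
          nlinarith
        exact le_max_of_le_right h2
  have hbdd : IsBoundedUnder (· ≤ ·) atTop w :=
    isBoundedUnder_of_eventually_le (eventually_atTop.mpr ⟨0, hboundS⟩)
  have hbdd' : IsBoundedUnder (· ≥ ·) atTop w :=
    isBoundedUnder_of_eventually_ge (Eventually.of_forall hw_nonneg)
  set L := limsup w atTop with hL
  -- key inequality : L ≤ c * L + Wb for any essential bound Wb of W
  have key : ∀ Wb : ℝ, (∀ t, W t ≤ Wb) → L ≤ c * L + Wb := by
    intro Wb hWb
    have hstep : ∀ ε > (0:ℝ), L ≤ c * (L + ε) + Wb := by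
      intro ε hε
      have hev : ∀ᶠ t in atTop, w t < L + ε :=
        eventually_lt_of_limsup_lt (by linarith) hbdd
      obtain ⟨T, hT⟩ := eventually_atTop.mp hev
      have hev2 : ∀ᶠ t in atTop, w t ≤ c * (L + ε) + Wb := by
        rw [eventually_atTop]
        refine ⟨max (T + Tstar) Tstar, fun t ht => ?_⟩
        have h1 : T + Tstar ≤ t := le_trans (le_max_left _ _) ht
        have h2 : Tstar ≤ t := le_trans (le_max_right _ _) ht
        have hsub : sSup (w '' Set.Icc (t - Tstar) t) ≤ L + ε := by
          apply csSup_le ((Set.nonempty_Icc.mpr (by linarith)).image w)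
          rintro y ⟨x, hx, rfl⟩
          exact (hT x (by linarith [hx.1])).le
        calc w t ≤ c * sSup (w '' Set.Icc (t - Tstar) t) + W t := hrec t h2
          _ ≤ c * (L + ε) + Wb := by
              have := hWb t
              nlinarith
      exact limsup_le_of_le hbdd'.isCoboundedUnder_le hev2
    have : ∀ δ > (0:ℝ), L ≤ c * L + Wb + δ := by
      intro δ hδ
      have := hstep (δ / c) (div_pos hδ hc0)
      have hcd : c * (δ / c) = δ := by field_simp
      nlinarith
    exact le_of_forall_pos_le_add this
  constructor
  · have h1 := key Wbar hWbar
    rw [le_div_iff₀ (by linarith)]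
    nlinarith
  · intro hW0
    have h1 : L ≤ c * L + 0 := key 0 (fun t => (hW0 t).le)
    have hL0 : L ≤ 0 := by nlinarith
    have hL0' : (0:ℝ) ≤ liminf w atTop :=
      le_liminf_of_le hbdd.isCoboundedUnder_ge (Eventually.of_forall hw_nonneg)
    exact tendsto_of_le_liminf_of_limsup_le hL0' hL0 hbdd hbdd'
end
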